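/- Let p : Y → X be a Kan fibration of simplicial sets and let x be an n-simplex of X. Then x lies in the image of p_n : Y_n → X_n if and only if every vertex of x (i.e., every 0-simplex obtained from x by a simplicial operator [0] → [n]) lies in the image of p_0 : Y_0 → X_0. -/

import Mathlib

universe u

open CategoryTheory Simplicial MonoidalCategory CategoryTheory.Limits
  CategoryTheory.GrothendieckTopology

/-- A Kan fibration: a map of simplicial sets with the right lifting property
against all horn inclusions `Λ[n, i] ⟶ Δ[n]` for `n ≥ 1`. -/
def KanFibration {Y X : SSet.{u}} (p : Y ⟶ X) : Prop :=
  ∀ (n : ℕ) (i : Fin (n + 2)), HasLiftingProperty (SSet.horn.{u} (n + 1) i).ι p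

namespace KanLiftAux

open SimplexCategory SSet Opposite

theorem predAbove_val {n : ℕ} (p : Fin n) (i : Fin (n+1)) :
    (Fin.predAbove p i : ℕ) = if (p : ℕ) < i then (i : ℕ) - 1 else i := by
  rcases lt_or_ge p.castSucc i with h | h
  · rw [Fin.predAbove_of_castSucc_lt _ _ h, Fin.coe_pred,
      if_pos (by simpa [Fin.lt_iff_val_lt_val] using h)]
  · rw [Fin.predAbove_of_le_castSucc _ _ h, Fin.coe_castPred,
      if_neg (by simpa [not_lt, Fin.le_iff_val_le_val] using h)]

theorem factor_δ_val {d m : ℕ} (α : (⦋d⦌ : SimplexCategory) ⟶ ⦋m+1⦌) (j : Fin (m+2))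
    (t : Fin (d+1)) :
    ((factor_δ α j).toOrderHom t : ℕ) =
      if (α.toOrderHom t : ℕ) < j then (α.toOrderHom t : ℕ) else (α.toOrderHom t : ℕ) - 1 := by
  show ((Fin.predAbove (Fin.predAbove 0 j) (α.toOrderHom t)) : ℕ) = _
  rw [predAbove_val, predAbove_val]
  have h0 : ((0 : Fin (m+1)) : ℕ) = 0 := rfl
  split_ifs <;> omega

theorem delta_swap {m : ℕ} {j k : Fin (m+3)} (hjk : (j : ℕ) < (k : ℕ)) :
    δ (⟨(k : ℕ) - 1, by omega⟩ : Fin (m+2)) ≫ δ j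
      = δ (⟨(j : ℕ), by omega⟩ : Fin (m+2)) ≫ δ k := by
  have h3 : (⟨(j : ℕ), by omega⟩ : Fin (m+2)) ≤ ⟨(k : ℕ) - 1, by omega⟩ := by
    simp only [Fin.le_def]; omega
  have h := δ_comp_δ (n := m) h3
  have h1 : (⟨(k : ℕ) - 1, by omega⟩ : Fin (m+2)).succ = k := by
    ext; simp only [Fin.val_succ]; omega
  have h2 : (⟨(j : ℕ), by omega⟩ : Fin (m+2)).castSucc = j := by
    ext; simp only [Fin.coe_castSucc]
  rw [h1, h2] at h
  exact h.symm

/-- Compatibility of a family of potential horn faces. -/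
def Compat {S : SSet.{u}} : ∀ {m : ℕ}, (i : Fin (m+2)) → (∀ j : Fin (m+2), j ≠ i → S _⦋m⦌) → Prop := fun {m} => match m with
  | 0 => fun _ _ => True
  | m+1 => fun i u => ∀ (j k : Fin (m+3)) (hj : j ≠ i) (hk : k ≠ i) (hjk : (j : ℕ) < (k : ℕ)),
      S.map (δ (⟨(j : ℕ), by omega⟩ : Fin (m+2))).op (u k hk) =
      S.map (δ (⟨(k : ℕ) - 1, by omega⟩ : Fin (m+2))).op (u j hj)

theorem welldef_lt {S : SSet.{u}} {m : ℕ} {i : Fin (m+3)} {u : ∀ j : Fin (m+3), j ≠ i → S _⦋m+1⦌}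
    (hu : Compat i u) {d : ℕ} (α : (⦋d⦌ : SimplexCategory) ⟶ ⦋m+2⦌) {j k : Fin (m+3)}
    (hj : j ≠ i) (hk : k ≠ i) (hjk : (j : ℕ) < (k : ℕ))
    (hαj : ∀ t, α.toOrderHom t ≠ j) (hαk : ∀ t, α.toOrderHom t ≠ k) :
    S.map (factor_δ α j).op (u j hj) = S.map (factor_δ α k).op (u k hk) := by
  set kp : Fin (m+2) := ⟨(k : ℕ) - 1, by omega⟩ with hkp
  set jc : Fin (m+2) := ⟨(j : ℕ), by omega⟩ with hjc
  have hβ : ∀ t, (factor_δ α j).toOrderHom t ≠ kp := by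
    intro t
    have h1 := factor_δ_val α j t
    have h2 : ((α.toOrderHom t : ℕ)) ≠ (j : ℕ) := fun h => hαj t (Fin.ext h)
    have h3 : ((α.toOrderHom t : ℕ)) ≠ (k : ℕ) := fun h => hαk t (Fin.ext h)
    rw [Fin.ne_iff_vne, hkp]
    simp only at h1 ⊢
    split_ifs at h1 <;> omega
  have hβ' : ∀ t, (factor_δ α k).toOrderHom t ≠ jc := by
    intro t
    have h1 := factor_δ_val α k t
    have h2 : ((α.toOrderHom t : ℕ)) ≠ (j : ℕ) := fun h => hαj t (Fin.ext h)
    have h3 : ((α.toOrderHom t : ℕ)) ≠ (k : ℕ) := fun h => hαk t (Fin.ext h)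
    rw [Fin.ne_iff_vne, hjc]
    simp only at h1 ⊢
    split_ifs at h1 <;> omega
  have s1 : factor_δ (factor_δ α j) kp ≫ δ kp = factor_δ α j := factor_δ_spec _ _ hβ
  have s2 : factor_δ (factor_δ α k) jc ≫ δ jc = factor_δ α k := factor_δ_spec _ _ hβ'
  have sα1 : factor_δ α j ≫ δ j = α := factor_δ_spec _ _ hαj
  have sα2 : factor_δ α k ≫ δ k = α := factor_δ_spec _ _ hαk
  have hswap : δ kp ≫ δ j = δ jc ≫ δ k := delta_swap hjk
  have hγ : factor_δ (factor_δ α j) kp = factor_δ (factor_δ α k) jc := by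
    have h : (factor_δ (factor_δ α j) kp ≫ δ kp) ≫ δ j
        = (factor_δ (factor_δ α k) jc ≫ δ jc) ≫ δ k := by
      rw [s1, s2, sα1, sα2]
    rw [Category.assoc, Category.assoc, hswap] at h
    rwa [cancel_mono] at h
  have hu' : S.map (δ jc).op (u k hk) = S.map (δ kp).op (u j hj) := hu j k hj hk hjk
  calc S.map (factor_δ α j).op (u j hj)
      = S.map (factor_δ (factor_δ α j) kp ≫ δ kp).op (u j hj) := by rw [s1]
    _ = S.map (factor_δ (factor_δ α j) kp).op (S.map (δ kp).op (u j hj)) := by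
        rw [op_comp, FunctorToTypes.map_comp_apply]
    _ = S.map (factor_δ (factor_δ α k) jc).op (S.map (δ jc).op (u k hk)) := by
        rw [hγ, hu']
    _ = S.map (factor_δ (factor_δ α k) jc ≫ δ jc).op (u k hk) := by
        rw [op_comp, FunctorToTypes.map_comp_apply]
    _ = S.map (factor_δ α k).op (u k hk) := by rw [s2]

theorem welldef {S : SSet.{u}} {m : ℕ} {i : Fin (m+2)} {u : ∀ j : Fin (m+2), j ≠ i → S _⦋m⦌}
    (hu : Compat i u) {d : ℕ} (α : (⦋d⦌ : SimplexCategory) ⟶ ⦋m+1⦌) {j k : Fin (m+2)}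
    (hj : j ≠ i) (hk : k ≠ i)
    (hαj : ∀ t, α.toOrderHom t ≠ j) (hαk : ∀ t, α.toOrderHom t ≠ k) :
    S.map (factor_δ α j).op (u j hj) = S.map (factor_δ α k).op (u k hk) := by
  rcases Nat.lt_trichotomy (j : ℕ) (k : ℕ) with h | h | h
  · cases m with
    | zero =>
      exfalso
      have h1 : ((α.toOrderHom 0 : Fin 2) : ℕ) ≠ (j : ℕ) := fun h => hαj 0 (Fin.ext h)
      have h2 : ((α.toOrderHom 0 : Fin 2) : ℕ) ≠ (k : ℕ) := fun h => hαk 0 (Fin.ext h)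
      omega
    | succ m' => exact welldef_lt hu α hj hk h hαj hαk
  · have : j = k := Fin.ext h
    subst this
    rfl
  · cases m with
    | zero =>
      exfalso
      have h1 : ((α.toOrderHom 0 : Fin 2) : ℕ) ≠ (j : ℕ) := fun h => hαj 0 (Fin.ext h)
      have h2 : ((α.toOrderHom 0 : Fin 2) : ℕ) ≠ (k : ℕ) := fun h => hαk 0 (Fin.ext h)
      omega
    | succ m' => exact (welldef_lt hu α hk hj h hαk hαj).symm

/-- Interpret a simplex of the standard simplex as a morphism of `SimplexCategory`. -/
def toHom {n : SimplexCategory} {dop : SimplexCategoryᵒᵖ}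
    (f : (SSet.stdSimplex.{u}.obj n).obj dop) :
    (⦋dop.unop.len⦌ : SimplexCategory) ⟶ n :=
  stdSimplex.objEquiv f

lemma exists_missing {m : ℕ} {i : Fin (m+2)} {dop : SimplexCategoryᵒᵖ}
    (f : (Λ[m+1, i] : SSet.{u}).obj dop) :
    ∃ j, ¬j = i ∧ ∀ t, (toHom f.1).toOrderHom t ≠ j := by
  have hf' := f.2
  simp [← Set.univ_subset_iff, Set.subset_def, stdSimplex.asOrderHom, horn, toHom, stdSimplex.objEquiv, Equiv.ulift_apply, not_or] at hf' ⊢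
  exact hf'

/-- A value of `Fin (m+2)` missed by the simplex `f` of the horn, and distinct from `i`. -/
noncomputable def missing {m : ℕ} {i : Fin (m+2)} {dop : SimplexCategoryᵒᵖ}
    (f : (Λ[m+1, i] : SSet.{u}).obj dop) : Fin (m+2) :=
  (exists_missing f).choose

lemma missing_ne {m : ℕ} {i : Fin (m+2)} {dop : SimplexCategoryᵒᵖ}
    (f : (Λ[m+1, i] : SSet.{u}).obj dop) : missing f ≠ i :=
  (exists_missing f).choose_spec.1

lemma missing_not_mem {m : ℕ} {i : Fin (m+2)} {dop : SimplexCategoryᵒᵖ}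
    (f : (Λ[m+1, i] : SSet.{u}).obj dop) : ∀ t, (toHom f.1).toOrderHom t ≠ missing f :=
  (exists_missing f).choose_spec.2

/-- The morphism from a horn determined by a compatible family of faces. -/
noncomputable def hornMap {S : SSet.{u}} {m : ℕ} {i : Fin (m+2)}
    (u : ∀ j : Fin (m+2), j ≠ i → S _⦋m⦌) (hu : Compat i u) :
    (Λ[m+1, i] : SSet.{u}) ⟶ S where
  app dop := ↾fun f => S.map (factor_δ (toHom f.1) (missing f)).op (u (missing f) (missing_ne f))
  naturality dop d'op g := by
    ext f
    set f' := (Λ[m+1, i] : SSet.{u}).map g f with hf'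
    have hcomp : toHom (f'.1) = g.unop ≫ toHom f.1 := rfl
    show S.map (factor_δ (toHom f'.1) (missing f')).op (u (missing f') (missing_ne f'))
      = S.map g (S.map (factor_δ (toHom f.1) (missing f)).op (u (missing f) (missing_ne f)))
    have step1 : S.map (factor_δ (toHom f'.1) (missing f')).op (u (missing f') (missing_ne f'))
        = S.map (factor_δ (toHom f'.1) (missing f)).op (u (missing f) (missing_ne f)) := by
      apply welldef hu (toHom f'.1) (missing_ne f') (missing_ne f) (missing_not_mem f')
      intro t
      rw [hcomp]
      exact missing_not_mem f (g.unop.toOrderHom t)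
    rw [step1]
    have hfac : factor_δ (toHom f'.1) (missing f)
        = g.unop ≫ factor_δ (toHom f.1) (missing f) := by
      rw [← cancel_mono (δ (missing f))]
      rw [factor_δ_spec (toHom f'.1) (missing f) (by
        intro t; rw [hcomp]; exact missing_not_mem f (g.unop.toOrderHom t))]
      rw [Category.assoc, factor_δ_spec (toHom f.1) (missing f) (missing_not_mem f), hcomp]
    rw [hfac, op_comp, FunctorToTypes.map_comp_apply]
    rfl

lemma hornMap_face {S : SSet.{u}} {m : ℕ} {i : Fin (m+2)}
    (u : ∀ j : Fin (m+2), j ≠ i → S _⦋m⦌) (hu : Compat i u) (j : Fin (m+2)) (h : j ≠ i) :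
    (hornMap u hu).app (op ⦋m⦌) (SSet.horn.face i j h) = u j h := by
  have key : ∀ (j₀ : Fin (m+2)) (hj₀ : j₀ ≠ i) (e : j₀ = j)
      (hmiss : ∀ t, (δ j).toOrderHom t ≠ j₀),
      S.map (factor_δ (δ j) j₀).op (u j₀ hj₀) = u j h := by
    intro j₀ hj₀ e hmiss
    subst e
    have hfac : factor_δ (δ j₀) j₀ = 𝟙 _ := by
      rw [← cancel_mono (δ j₀), factor_δ_spec _ _ hmiss, Category.id_comp]
    rw [hfac, op_id, FunctorToTypes.map_id_apply]
  have hmiss : ∀ t, (δ j).toOrderHom t ≠ missing (SSet.horn.face i j h) :=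
    missing_not_mem (SSet.horn.face i j h)
  have e : missing (SSet.horn.face i j h) = j := by
    by_contra hne
    obtain ⟨t, ht⟩ := Fin.exists_succAbove_eq hne
    exact hmiss t ht
  exact key _ (missing_ne _) e hmiss

theorem horn_fill {Y X : SSet.{u}} (p : Y ⟶ X) (hp : KanFibration p) {m : ℕ} (i : Fin (m+2))
    (u : ∀ j : Fin (m+2), j ≠ i → Y _⦋m⦌) (hu : Compat i u) (x : X _⦋m+1⦌)
    (hx : ∀ j hj, p.app _ (u j hj) = X.map (δ j).op x) :
    ∃ y : Y _⦋m+1⦌, p.app _ y = x ∧ ∀ j hj, Y.map (δ j).op y = u j hj := by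
  let σ : (Λ[m+1, i] : SSet.{u}) ⟶ Y := hornMap u hu
  let xb : (Δ[m+1] : SSet.{u}) ⟶ X := (yonedaEquiv (X := X) (n := ⦋m+1⦌)).symm x
  have hxb : ∀ (dop : SimplexCategoryᵒᵖ) (g : dop.unop ⟶ ⦋m+1⦌),
      xb.app dop ((stdSimplex.objEquiv).symm g) = X.map g.op x := fun _ _ => rfl
  have w : σ ≫ p = (horn (m+1) i).ι ≫ xb := by
    apply horn.hom_ext
    intro j hj
    show p.app _ (σ.app _ (horn.face i j hj)) = xb.app _ ((horn.face i j hj).1)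
    rw [show σ.app _ (horn.face i j hj) = u j hj from hornMap_face u hu j hj, hx j hj]
    exact (hxb (op ⦋m⦌) (δ j)).symm
  have sq : CommSq σ ((horn (m+1) i).ι) p xb := ⟨w⟩
  obtain ⟨⟨l, hl1, hl2⟩⟩ := (hp m i).sq_hasLift sq
  refine ⟨l.app (op ⦋m+1⦌) ((stdSimplex.objEquiv).symm (𝟙 _)), ?_, ?_⟩
  · have h2 : (l ≫ p).app (op ⦋m+1⦌)
        ((stdSimplex.objEquiv).symm (𝟙 (⦋m+1⦌ : SimplexCategory))) = x := by
      rw [hl2]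
      simpa using hxb (op ⦋m+1⦌) (𝟙 _)
    exact h2
  · intro j hj
    have hnat := NatTrans.naturality_apply l (δ j).op
      ((stdSimplex.objEquiv).symm (𝟙 _))
    have hmap : (Δ[m+1] : SSet.{u}).map (δ j).op ((stdSimplex.objEquiv).symm (𝟙 _))
        = (stdSimplex.objEquiv).symm (δ j) := by
      rw [stdSimplex.map_apply]
      simp only [Equiv.apply_symm_apply, Quiver.Hom.unop_op, Category.comp_id]
    rw [hmap] at hnat
    rw [← hnat]
    have h1 := ConcreteCategory.congr_hom (congr_app hl1 (op ⦋m⦌)) (horn.face i j hj)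
    simp only [NatTrans.comp_app, types_comp_apply] at h1
    change l.app _ ((horn.face i j hj).1) = _ at h1
    rw [show ((horn.face i j hj).1 : (Δ[m+1] : SSet.{u}).obj (op ⦋m⦌))
      = (stdSimplex.objEquiv).symm (δ j) from rfl] at h1
    rw [h1]
    exact hornMap_face u hu j hj

/-- Partial lifts of a simplex `x`, in consecutive dimensions `m` and `m+1`. -/
structure Tower {Y X : SSet.{u}} (p : Y ⟶ X) {nn : ℕ} (x : X _⦋nn⦌) (m : ℕ) where
  L : ((⦋m⦌ : SimplexCategory) ⟶ ⦋nn⦌) → Y _⦋m⦌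
  L' : ((⦋m+1⦌ : SimplexCategory) ⟶ ⦋nn⦌) → Y _⦋m+1⦌
  hL : ∀ α, p.app _ (L α) = X.map α.op x
  hL' : ∀ α, p.app _ (L' α) = X.map α.op x
  compat : ∀ (α : (⦋m+1⦌ : SimplexCategory) ⟶ ⦋nn⦌) (j : Fin (m+2)), j ≠ 0 →
    Y.map (δ j).op (L' α) = L (δ j ≫ α)

section TowerConstruction

variable {Y X : SSet.{u}} (p : Y ⟶ X) (hp : KanFibration p) {nn : ℕ} (x : X _⦋nn⦌)
  (w : ((⦋0⦌ : SimplexCategory) ⟶ ⦋nn⦌) → Y _⦋0⦌)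
  (hw : ∀ f, p.app _ (w f) = X.map f.op x)

/-- The extension step: given compatible lifts in dimensions `m`, `m+1`,
produce lifts in dimension `m+2` by horn filling. -/
noncomputable def towerStep (m : ℕ) (T : Tower p x m) : Tower p x (m+1) := by
  have key : ∀ α : (⦋m+2⦌ : SimplexCategory) ⟶ ⦋nn⦌,
      ∃ y : Y _⦋m+1+1⦌, p.app _ y = X.map α.op x ∧
        ∀ (j : Fin (m+3)) (hj : j ≠ (0 : Fin (m+3))),
          Y.map (δ j).op y = T.L' (δ j ≫ α) := by
    intro α
    refine horn_fill p hp (m := m+1) (0 : Fin (m+3))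
      (fun j hj => T.L' (δ j ≫ α)) ?_ (X.map α.op x) ?_
    · intro j k hj hk hjk
      have hLj := T.compat (δ k ≫ α) ⟨(j : ℕ), by omega⟩ (by
        simp only [ne_eq, Fin.ext_iff, Fin.val_zero]
        intro h0
        exact hj (Fin.ext h0))
      have hLk := T.compat (δ j ≫ α) ⟨(k : ℕ) - 1, by omega⟩ (by
        simp only [ne_eq, Fin.ext_iff, Fin.val_zero]
        intro h0
        have hj0 : (j : ℕ) ≠ 0 := fun hh => hj (Fin.ext hh)
        omega)
      rw [hLj, hLk, ← Category.assoc, ← Category.assoc, delta_swap hjk]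
    · intro j hj
      rw [T.hL' (δ j ≫ α), op_comp, FunctorToTypes.map_comp_apply]
  exact
    { L := T.L'
      L' := fun α => (key α).choose
      hL := T.hL'
      hL' := fun α => (key α).choose_spec.1
      compat := fun α j hj => (key α).choose_spec.2 j hj }

/-- The base of the tower: lifts in dimensions `0` and `1`. -/
noncomputable def towerBase : Tower p x 0 := by
  have key : ∀ α : (⦋1⦌ : SimplexCategory) ⟶ ⦋nn⦌,
      ∃ y : Y _⦋0+1⦌, p.app _ y = X.map α.op x ∧
        ∀ (j : Fin 2) (hj : j ≠ (0 : Fin 2)), Y.map (δ j).op y = w (δ j ≫ α) := by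
    intro α
    refine horn_fill p hp (m := 0) (0 : Fin 2)
      (fun j hj => w (δ j ≫ α)) trivial (X.map α.op x) ?_
    intro j hj
    rw [hw (δ j ≫ α), op_comp, FunctorToTypes.map_comp_apply]
  exact
    { L := w
      L' := fun α => (key α).choose
      hL := hw
      hL' := fun α => (key α).choose_spec.1
      compat := fun α j hj => (key α).choose_spec.2 j hj }

/-- The tower of partial lifts in all dimensions. -/
noncomputable def tower : ∀ m : ℕ, Tower p x m := fun m => match m with
  | 0 => towerBase p hp x w hw
  | m+1 => towerStep p hp x m (tower m)

end TowerConstruction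

end KanLiftAux

/-- For a Kan fibration `p : Y ⟶ X`, an `n`-simplex `x` of `X` is in the image of
`p` if and only if all of its vertices (its images under simplicial operators
`[0] ⟶ ⦋n⦌`) are in the image of `p` on `0`-simplices. -/
theorem mem_image_of_kan_fibration_iff_vertices {Y X : SSet.{u}} (p : Y ⟶ X)
    (hp : KanFibration p) (n : SimplexCategoryᵒᵖ) (x : X.obj n) :
    x ∈ Set.range (p.app n) ↔
      ∀ f : SimplexCategory.mk 0 ⟶ n.unop,
        X.map f.op x ∈ Set.range (p.app (Opposite.op (SimplexCategory.mk 0))) := by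
  induction n using Opposite.rec with
  | op nu =>
    induction nu using SimplexCategory.rec with
    | mk nn =>
      constructor
      · rintro ⟨y, rfl⟩ f
        exact ⟨Y.map f.op y, NatTrans.naturality_apply p f.op y⟩
      · intro hv
        choose w hw using hv
        have T := KanLiftAux.tower p hp (nn := nn) x w hw
        refine ⟨(T nn).L (𝟙 _), ?_⟩
        have h := (T nn).hL (𝟙 _)
        simpa using h
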